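/- Let f(x,y) ∈ ℂ[x,y] be a nonzero binary form of degree d with factorization f = Π_{i=0}^{r} ℓ_i(x,y)^{m_i}, where r ≥ 1 and the ℓ_i are pairwise nonproportional linear forms. Then L_ℂ(f) ≥ max(m_0, …, m_r) + 1. -/

import Mathlib

open MvPolynomial Finset

/-- The linear form `a*x + b*y` as a binary polynomial over `ℂ`. -/
noncomputable def lform (a b : ℂ) : MvPolynomial (Fin 2) ℂ := C a * X 0 + C b * X 1

/-- The `K`-rank of a binary form `p`: the least `r` such that `p` is a `K`-linear
combination of `r` d-th powers of linear forms with coefficients in `K`. -/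
noncomputable def rankIn (K : Subfield ℂ) (d : ℕ) (p : MvPolynomial (Fin 2) ℂ) : ℕ :=
  sInf {r : ℕ | ∃ lam a b : Fin r → ℂ, (∀ j, lam j ∈ K ∧ a j ∈ K ∧ b j ∈ K) ∧
    p = ∑ j, C (lam j) * lform (a j) (b j) ^ d}

/-- The Waring rank `L_ℂ` of a binary form. -/
noncomputable def rankC (d : ℕ) (p : MvPolynomial (Fin 2) ℂ) : ℕ :=
  sInf {r : ℕ | ∃ lam a b : Fin r → ℂ, p = ∑ j, C (lam j) * lform (a j) (b j) ^ d}

/-- Single partial derivative as a plain function. -/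
noncomputable def pd (i : Fin 2) (p : MvPolynomial (Fin 2) ℂ) : MvPolynomial (Fin 2) ℂ :=
  pderiv i p

/-- `apolar h p = h(D) p`, the differential operator of `h` applied to `p`. -/
noncomputable def apolar (h p : MvPolynomial (Fin 2) ℂ) : MvPolynomial (Fin 2) ℂ :=
  ∑ m ∈ h.support, h.coeff m • ((pd 0)^[m 0] ((pd 1)^[m 1] p))

/-- The subfield of `ℂ` generated by a subfield `K` and a set `S`. -/
noncomputable def adj (K : Subfield ℂ) (S : Set ℂ) : Subfield ℂ := Subfield.closure (↑K ∪ S)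

/-- `z` and `w` are conjugate over `K` in `K(s)`: `z = a + b s`, `w = a - b s` with `a, b ∈ K`. -/
def conjPair (K : Subfield ℂ) (s z w : ℂ) : Prop :=
  ∃ a b : ℂ, a ∈ K ∧ b ∈ K ∧ z = a + b * s ∧ w = a - b * s

noncomputable def lformR (a b : ℝ) : MvPolynomial (Fin 2) ℝ := C a * X 0 + C b * X 1

noncomputable def rankR (d : ℕ) (p : MvPolynomial (Fin 2) ℝ) : ℕ :=
  sInf {r : ℕ | ∃ lam a b : Fin r → ℝ, p = ∑ j, C (lam j) * lformR (a j) (b j) ^ d}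

/-!
Write `f = ℓ^M u` with `ℓ = ax + by` a factor of maximal multiplicity `M`, so that `u` does not
vanish at the zero `(-b, a)` of `ℓ`, and `d = M + k` with `k ≥ 1`. Suppose `f = ∑_{j<s} λⱼ Lⱼ^d`
with `s ≤ M`. Absorbing the `Lⱼ` proportional to `ℓ` gives `ℓ^M (u - c ℓ^k) = ∑_{j∈P} λⱼ Lⱼ^d`.
For `Lⱼ = αx + βy` the derivation `β∂ₓ - α∂_y` kills `Lⱼ^d`, so the composite of these `#P ≤ M`
derivations kills the right side. On the left each of them lowers the order of vanishing along
`ℓ` by exactly one, leaving `ℓ^n (c' (u - c ℓ^k) + ℓ w)` with `c' ≠ 0`; evaluating at `(-b, a)`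
gives `c' u(-b, a) = 0`, a contradiction. The rank is not the junk value `sInf ∅ = 0` because the
powers `(x + t y)^d`, `t = 0, …, d`, span all forms of degree `d` (a Vandermonde argument).
-/

theorem mem_span_range_sum_pow_smul {K E : Type*} [Field K] [AddCommGroup E] [Module K E]
    {n : ℕ} {v : Fin n → K} (hv : Function.Injective v) (q : Fin n → E) (k : Fin n) :
    q k ∈ Submodule.span K (Set.range fun i => ∑ l : Fin n, v i ^ (l : ℕ) • q l) := by
  set W := Matrix.vandermonde v
  have hW : W⁻¹ * W = 1 :=
    Matrix.nonsing_inv_mul W (Matrix.det_vandermonde_ne_zero_iff.2 hv).isUnit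
  have hq : q k = ∑ i, W⁻¹ k i • ∑ l, W i l • q l := by
    simp only [Finset.smul_sum, smul_smul]
    rw [Finset.sum_comm]
    simp only [← Finset.sum_smul, ← Matrix.mul_apply, hW, Matrix.one_apply, ite_smul, one_smul,
      zero_smul, Finset.sum_ite_eq, Finset.mem_univ, if_true]
  rw [hq]
  exact Submodule.sum_mem _ fun i _ => Submodule.smul_mem _ _ (Submodule.subset_span ⟨i, rfl⟩)

lemma lform_one_pow (d : ℕ) (t : ℂ) :
    lform 1 t ^ d = ∑ j : Fin (d + 1),
      t ^ (j : ℕ) • (C (d.choose j : ℂ) * (X 0 ^ (d - j) * X 1 ^ (j : ℕ))) := by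
  rw [show lform 1 t = C t * X 1 + X 0 by simp [lform, add_comm], add_pow,
    ← Fin.sum_univ_eq_sum_range]
  refine Finset.sum_congr rfl fun j _ => ?_
  rw [smul_eq_C_mul, mul_pow, ← C_pow, ← map_natCast C]
  ring

lemma X_pow_mul_X_pow_mem_span_lform_pow {d j : ℕ} (hj : j ≤ d) :
    X 0 ^ (d - j) * X 1 ^ j ∈
      Submodule.span ℂ (Set.range fun t : Fin (d + 1) => lform 1 (t : ℕ) ^ d) := by
  have hinj : Function.Injective fun t : Fin (d + 1) => ((t : ℕ) : ℂ) :=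
    fun s t h => Fin.ext (Nat.cast_injective h)
  set q : Fin (d + 1) → MvPolynomial (Fin 2) ℂ :=
    fun j => C (d.choose j : ℂ) * (X 0 ^ (d - j) * X 1 ^ (j : ℕ))
  have hrange : (Set.range fun t : Fin (d + 1) => lform 1 (t : ℕ) ^ d) =
      Set.range fun t : Fin (d + 1) => ∑ l : Fin (d + 1), ((t : ℕ) : ℂ) ^ (l : ℕ) • q l := by
    simp only [lform_one_pow, q]
  have hq := Submodule.smul_mem _ (d.choose j : ℂ)⁻¹
    (hrange ▸ mem_span_range_sum_pow_smul hinj q ⟨j, Nat.lt_succ_of_le hj⟩)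
  have hchoose : (d.choose j : ℂ) ≠ 0 := by exact_mod_cast (Nat.choose_pos hj).ne'
  rwa [smul_eq_C_mul, ← mul_assoc, ← C_mul, inv_mul_cancel₀ hchoose, C_1, one_mul] at hq

lemma MvPolynomial.IsHomogeneous.mem_span_lform_pow {d : ℕ} {f : MvPolynomial (Fin 2) ℂ}
    (hf : f.IsHomogeneous d) :
    f ∈ Submodule.span ℂ (Set.range fun t : Fin (d + 1) => lform 1 (t : ℕ) ^ d) := by
  rw [← support_sum_monomial_coeff f]
  refine Submodule.sum_mem _ fun m hm => ?_
  have hdeg : m 0 + m 1 = d := by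
    simpa [Finsupp.weight_apply, Finsupp.sum_fintype, Fin.sum_univ_two] using
      hf (mem_support_iff.1 hm)
  rw [monomial_eq, Finsupp.prod_fintype _ _ (fun i => pow_zero _), Fin.prod_univ_two,
    ← smul_eq_C_mul, show m 0 = d - m 1 by omega]
  exact Submodule.smul_mem _ _ (X_pow_mul_X_pow_mem_span_lform_pow (by omega))

lemma MvPolynomial.IsHomogeneous.exists_sum_lform_pow {d : ℕ} {f : MvPolynomial (Fin 2) ℂ}
    (hf : f.IsHomogeneous d) :
    ∃ (s : ℕ) (lam A B : Fin s → ℂ), f = ∑ j, C (lam j) * lform (A j) (B j) ^ d := by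
  obtain ⟨lam, hlam⟩ := (Submodule.mem_span_range_iff_exists_fun ℂ).1 hf.mem_span_lform_pow
  exact ⟨d + 1, lam, 1, fun t => (t : ℕ), by simp [← hlam, smul_eq_C_mul]⟩

lemma le_rankC {d n : ℕ} {f : MvPolynomial (Fin 2) ℂ} (hf : f.IsHomogeneous d)
    (h : ∀ (s : ℕ) (lam A B : Fin s → ℂ), f = ∑ j, C (lam j) * lform (A j) (B j) ^ d → n ≤ s) :
    n ≤ rankC d f := by
  obtain ⟨s, lam, A, B, hs⟩ := hf.exists_sum_lform_pow
  exact le_csInf ⟨s, lam, A, B, hs⟩ fun s ⟨lam, A, B, hs⟩ => h s lam A B hs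

lemma eval_lform (p : Fin 2 → ℂ) (a b : ℂ) : eval p (lform a b) = a * p 0 + b * p 1 := by
  simp [lform]

lemma isHomogeneous_lform (a b : ℂ) : (lform a b).IsHomogeneous 1 :=
  (isHomogeneous_C_mul_X a 0).add (isHomogeneous_C_mul_X b 1)

lemma lform_ne_zero {a b : ℂ} (h : a ≠ 0 ∨ b ≠ 0) : lform a b ≠ 0 := by
  intro h0
  have h1 := congrArg (eval ![1, 0]) h0
  have h2 := congrArg (eval ![0, 1]) h0
  simp only [eval_lform, map_zero] at h1 h2
  simp_all

lemma exists_lform_eq_C_mul {a b α β : ℂ} (hab : a ≠ 0 ∨ b ≠ 0) (h : a * β - b * α = 0) :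
    ∃ e, lform α β = C e * lform a b := by
  rcases hab with ha | hb
  · refine ⟨α / a, ?_⟩
    rw [show β = α / a * b by field_simp; linear_combination h]
    nth_rewrite 1 [← div_mul_cancel₀ α ha]
    simp only [lform, C_mul]
    ring
  · refine ⟨β / b, ?_⟩
    rw [show α = β / b * a by field_simp; linear_combination -h]
    nth_rewrite 2 [← div_mul_cancel₀ β hb]
    simp only [lform, C_mul]
    ring

noncomputable def annDeriv (α β : ℂ) :
    Derivation ℂ (MvPolynomial (Fin 2) ℂ) (MvPolynomial (Fin 2) ℂ) :=
  β • pderiv 0 - α • pderiv 1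

lemma annDeriv_lform (α β a b : ℂ) : annDeriv α β (lform a b) = C (a * β - b * α) := by
  simp only [annDeriv, lform, Derivation.coe_sub, Derivation.coe_smul, Pi.sub_apply,
    Pi.smul_apply, map_add, Derivation.leibniz, pderiv_X_self, pderiv_X_of_ne, derivation_C,
    smul_eq_C_mul, C_sub, C_mul, zero_ne_one, one_ne_zero, Ne, not_false_eq_true]
  ring

lemma annDeriv_lform_pow (α β a b : ℂ) (k : ℕ) :
    annDeriv α β (lform a b ^ k) = C (k * (a * β - b * α)) * lform a b ^ (k - 1) := by
  rw [Derivation.leibniz_pow, annDeriv_lform, smul_eq_mul, nsmul_eq_mul, C_mul, map_natCast]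
  ring

lemma annDeriv_lform_pow_succ_mul (α β a b : ℂ) (k : ℕ) (v : MvPolynomial (Fin 2) ℂ) :
    annDeriv α β (lform a b ^ (k + 1) * v) =
      lform a b ^ k * (C ((k + 1) * (a * β - b * α)) * v + lform a b * annDeriv α β v) := by
  rw [Derivation.leibniz, annDeriv_lform_pow, smul_eq_mul, smul_eq_mul]
  push_cast
  ring

noncomputable def annOp (L : List (ℂ × ℂ)) : Module.End ℂ (MvPolynomial (Fin 2) ℂ) :=
  (L.map fun ab => (annDeriv ab.1 ab.2 : Module.End ℂ (MvPolynomial (Fin 2) ℂ))).prod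

@[simp] lemma annOp_nil (p : MvPolynomial (Fin 2) ℂ) : annOp [] p = p := rfl

@[simp] lemma annOp_cons (ab : ℂ × ℂ) (L : List (ℂ × ℂ)) (p : MvPolynomial (Fin 2) ℂ) :
    annOp (ab :: L) p = annDeriv ab.1 ab.2 (annOp L p) := rfl

lemma annOp_lform_pow (L : List (ℂ × ℂ)) (a b : ℂ) (k : ℕ) :
    ∃ e k', annOp L (lform a b ^ k) = C e * lform a b ^ k' := by
  induction L with
  | nil => exact ⟨1, k, by simp⟩
  | cons ab L ih =>
    obtain ⟨e, k', h⟩ := ih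
    refine ⟨e * (k' * (a * ab.2 - b * ab.1)), k' - 1, ?_⟩
    rw [annOp_cons, h, ← smul_eq_C_mul, Derivation.map_smul, annDeriv_lform_pow, smul_eq_C_mul,
      ← mul_assoc, ← C_mul]

lemma annOp_lform_pow_of_mem {L : List (ℂ × ℂ)} {a b : ℂ} (h : (a, b) ∈ L) (k : ℕ) :
    annOp L (lform a b ^ k) = 0 := by
  induction L with
  | nil => simp at h
  | cons ab L ih =>
    rcases List.mem_cons.1 h with rfl | h
    · obtain ⟨e, k', h⟩ := annOp_lform_pow L a b k
      rw [annOp_cons, h, ← smul_eq_C_mul, Derivation.map_smul, annDeriv_lform_pow]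
      simp [mul_comm a b]
    · rw [annOp_cons, ih h, map_zero]

lemma annOp_lform_pow_mul {L : List (ℂ × ℂ)} {a b : ℂ} (hL : ∀ ab ∈ L, a * ab.2 - b * ab.1 ≠ 0)
    (n : ℕ) (v : MvPolynomial (Fin 2) ℂ) :
    ∃ c ≠ 0, ∃ w, annOp L (lform a b ^ (n + L.length) * v) =
      lform a b ^ n * (C c * v + lform a b * w) := by
  induction L generalizing n with
  | nil => exact ⟨1, one_ne_zero, 0, by simp⟩
  | cons ab L ih =>
    obtain ⟨c, hc, w, h⟩ := ih (fun x hx => hL x (List.mem_cons_of_mem _ hx)) (n + 1)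
    have hab := hL ab List.mem_cons_self
    refine ⟨(n + 1) * (a * ab.2 - b * ab.1) * c, mul_ne_zero (mul_ne_zero
      (Nat.cast_add_one_ne_zero n) hab) hc,
      C ((n + 1) * (a * ab.2 - b * ab.1)) * w + annDeriv ab.1 ab.2 (C c * v + lform a b * w), ?_⟩
    rw [annOp_cons, List.length_cons, show n + (L.length + 1) = n + 1 + L.length by omega, h,
      annDeriv_lform_pow_succ_mul]
    simp only [map_mul, map_add, map_natCast, map_one]
    ring

lemma exists_sum_lform_pow_eq_C_mul_add {ι : Type*} {a b : ℂ} (hab : a ≠ 0 ∨ b ≠ 0)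
    (S : Finset ι) (lam A B : ι → ℂ) (d : ℕ) :
    ∃ c, ∑ j ∈ S, C (lam j) * lform (A j) (B j) ^ d =
      C c * lform a b ^ d + ∑ j ∈ S with a * B j - b * A j ≠ 0,
        C (lam j) * lform (A j) (B j) ^ d := by
  choose! e he using fun j (h : a * B j - b * A j = 0) => exists_lform_eq_C_mul hab h
  refine ⟨∑ j ∈ S with ¬a * B j - b * A j ≠ 0, lam j * e j ^ d, ?_⟩
  rw [← Finset.sum_filter_not_add_sum_filter S (fun j => a * B j - b * A j ≠ 0), map_sum,
    Finset.sum_mul]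
  congr 1
  refine Finset.sum_congr rfl fun j hj => ?_
  rw [he j (not_not.1 (Finset.mem_filter.1 hj).2), mul_pow, ← C_pow, ← mul_assoc, ← C_mul]

theorem succ_le_of_lform_pow_mul_eq_sum {a b : ℂ} (hab : a ≠ 0 ∨ b ≠ 0)
    {u : MvPolynomial (Fin 2) ℂ} (hu : eval ![-b, a] u ≠ 0) {M k : ℕ} (hk : k ≠ 0) {s : ℕ}
    {lam A B : Fin s → ℂ}
    (h : lform a b ^ M * u = ∑ j, C (lam j) * lform (A j) (B j) ^ (M + k)) : M + 1 ≤ s := by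
  by_contra! hs
  obtain ⟨c, hc⟩ := exists_sum_lform_pow_eq_C_mul_add hab univ lam A B (M + k)
  set P := univ.filter fun j => a * B j - b * A j ≠ 0
  set L := P.toList.map fun j => (A j, B j)
  have hL : ∀ ab ∈ L, a * ab.2 - b * ab.1 ≠ 0 := by simp [L, P]
  obtain ⟨n, rfl⟩ : ∃ n, M = n + L.length :=
    ⟨M - L.length, by
      have : #P ≤ s := (card_le_univ P).trans_eq (Fintype.card_fin s)
      simp only [L, List.length_map, length_toList]
      omega⟩
  obtain ⟨c', hc', w, hw⟩ := annOp_lform_pow_mul hL n (u - C c * lform a b ^ k)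
  have hkill : annOp L (∑ j ∈ P, C (lam j) * lform (A j) (B j) ^ (n + L.length + k)) = 0 := by
    refine (map_sum _ _ _).trans (sum_eq_zero fun j hj => ?_)
    have hmem : (A j, B j) ∈ L := List.mem_map_of_mem (mem_toList.2 hj)
    rw [← smul_eq_C_mul, map_smul, annOp_lform_pow_of_mem hmem, smul_zero]
  have hfactor : lform a b ^ (n + L.length) * (u - C c * lform a b ^ k) =
      ∑ j ∈ P, C (lam j) * lform (A j) (B j) ^ (n + L.length + k) := by
    rw [mul_sub, h, hc, pow_add]
    ring
  rw [← hfactor, hw] at hkill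
  have h0 : C c' * (u - C c * lform a b ^ k) + lform a b * w = 0 :=
    (mul_eq_zero.1 hkill).resolve_left (pow_ne_zero _ (lform_ne_zero hab))
  have hzero : eval ![-b, a] (lform a b) = 0 := by simp [eval_lform, mul_comm]
  simpa [hzero, hk, hc', hu] using congrArg (eval ![-b, a]) h0

theorem rank_lower_bound_general (r : ℕ) (hr : 1 ≤ r)
    (a b : Fin (r + 1) → ℂ) (m : Fin (r + 1) → ℕ) (hm : ∀ i, 1 ≤ m i)
    (hdist : ∀ i j, i ≠ j → a i * b j - a j * b i ≠ 0)
    (f : MvPolynomial (Fin 2) ℂ)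
    (hf : f = ∏ i, lform (a i) (b i) ^ m i) :
    Finset.univ.sup m + 1 ≤ rankC (∑ i, m i) f := by
  obtain ⟨i₀, -, hi₀⟩ := exists_mem_eq_sup univ univ_nonempty m
  have : Nontrivial (Fin (r + 1)) := Fin.nontrivial_iff_two_le.2 (by omega)
  obtain ⟨i₁, hi₁⟩ := exists_ne i₀
  have hab : a i₀ ≠ 0 ∨ b i₀ ≠ 0 := by
    by_contra! h
    exact hdist i₀ i₁ hi₁.symm (by simp [h])
  have hrest : ∑ i ∈ univ.erase i₀, m i ≠ 0 :=
    (sum_eq_zero_iff.not.2 fun h => by simpa [h i₁ (mem_erase.2 ⟨hi₁, mem_univ _⟩)] using hm i₁)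
  have hu : eval ![-b i₀, a i₀] (∏ i ∈ univ.erase i₀, lform (a i) (b i) ^ m i) ≠ 0 := by
    simp only [map_prod, map_pow, eval_lform]
    refine prod_ne_zero_iff.2 fun i hi => pow_ne_zero _ fun h => ?_
    exact hdist i₀ i (mem_erase.1 hi).1.symm (by
      simp only [Matrix.cons_val_zero, Matrix.cons_val_one, Matrix.cons_val_fin_one] at h
      linear_combination h)
  have hhom : f.IsHomogeneous (∑ i, m i) := hf ▸ IsHomogeneous.prod _ _ _ fun i _ => by
    simpa using (isHomogeneous_lform (a i) (b i)).pow (m i)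
  refine le_rankC hhom fun s lam A B hs => ?_
  have hfactor : lform (a i₀) (b i₀) ^ univ.sup m * ∏ i ∈ univ.erase i₀, lform (a i) (b i) ^ m i =
      ∑ j, C (lam j) * lform (A j) (B j) ^ (univ.sup m + ∑ i ∈ univ.erase i₀, m i) := by
    rw [hi₀, add_sum_erase _ _ (mem_univ i₀), mul_prod_erase _ (fun i => lform (a i) (b i) ^ m i)
      (mem_univ i₀), ← hf, hs]
  exact succ_le_of_lform_pow_mul_eq_sum hab hu hrest hfactor

/-- **Lower bound for the Waring rank.** If `f = Π ℓᵢ^(mᵢ)` with at least two pairwise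
nonproportional linear factors, then `L_ℂ(f) ≥ max mᵢ + 1`. -/
theorem rank_lower_bound (r : ℕ) (hr : 1 ≤ r)
    (a b : Fin (r + 1) → ℂ) (m : Fin (r + 1) → ℕ) (hm : ∀ i, 1 ≤ m i)
    (hdist : ∀ i j, i ≠ j → a i * b j - a j * b i ≠ 0)
    (f : MvPolynomial (Fin 2) ℂ) (hf0 : f ≠ 0)
    (hf : f = ∏ i, lform (a i) (b i) ^ m i) :
    Finset.univ.sup m + 1 ≤ rankC (∑ i, m i) f :=
  rank_lower_bound_general r hr a b m hm hdist f hf
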